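/- arXiv:2310.03947 — 2 statements merged into one kernel-verified Lean document; each statement's English description precedes it below -/
import Mathlib

section
/- Let X be a Hilbert space and f : X → (-∞, ∞] proper, lower semicontinuous, convex. For λ > 0 let M_{λf}(x) = inf_z { f(z) + (1/(2λ))‖z - x‖² } be the Moreau envelope. Suppose S = argmin f is nonempty, x̄ ∈ S, and there exist C > 0, r > 0, η ∈ (0, ∞], α ∈ (0,1] such that d(x,S) ≤ C (f(x) - f(x̄))^α for all x ∈ B_r(x̄) with f(x̄) ≤ f(x) < f(x̄) + η. Then there exists C̃ > 0 such that d(x,S) ≤ C̃ (M_{λf}(x) - M_{λf}(x̄))^{min{α, 1/2}} for all x ∈ B_r(x̄) with M_{λf}(x̄) ≤ M_{λf}(x) < M_{λf}(x̄) + η. -/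
/-!
Let `p` be the proximal point of `x`, the minimiser of `z ↦ f z + ‖z - x‖² / (2λ)`; it exists
because this function is lower semicontinuous and strongly midpoint convex, so its minimising
sequences are Cauchy. Then `M x = f p + ‖p - x‖² / (2λ)` and `M x̄ = f x̄`, so with
`t = M x - M x̄` both `f p - f x̄ ≤ t` and `‖x - p‖ ≤ √(2λ t)`. The optimality condition at `p`
tested against the minimiser `x̄` gives `⟪x - p, x̄ - p⟫ ≤ 0`, hence `‖p - x̄‖ ≤ ‖x - x̄‖ < r`, and
the growth bound applies at `p`: `d(x, S) ≤ d(p, S) + ‖x - p‖ ≤ C t^α + √(2λ) t^(1/2)`.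
For `t ≤ 1` both powers are at most `t^min(α, 1/2)`; for `t > 1` use `d(x, S) ≤ ‖x - x̄‖ < r`.
-/

open Metric Set Filter Topology
open scoped InnerProductSpace

theorem EReal.add_coe_le_coe_iff {a : EReal} {q u : ℝ} :
    a + q ≤ u ↔ a ≤ ((u - q : ℝ) : EReal) := by
  rw [EReal.coe_sub,
    EReal.le_sub_iff_add_le (.inl (EReal.coe_ne_bot q)) (.inl (EReal.coe_ne_top q))]

section InnerProductSpace

variable {X : Type*} [NormedAddCommGroup X] [InnerProductSpace ℝ X]

theorem norm_midpoint_sub_sq (a b x : X) :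
    ‖(1/2 : ℝ) • a + (1/2 : ℝ) • b - x‖ ^ 2 =
      (‖a - x‖ ^ 2 + ‖b - x‖ ^ 2) / 2 - ‖a - b‖ ^ 2 / 4 := by
  have hpar := parallelogram_law_with_norm ℝ (a - x) (b - x)
  rw [show a - x - (b - x) = a - b by abel] at hpar
  rw [show (1/2 : ℝ) • a + (1/2 : ℝ) • b - x = (1/2 : ℝ) • ((a - x) + (b - x)) by module,
    norm_smul, Real.norm_of_nonneg (by norm_num)]
  nlinarith

theorem norm_sub_le_norm_sub_of_inner_nonpos {x p y : X} (h : ⟪x - p, y - p⟫_ℝ ≤ 0) :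
    ‖p - y‖ ≤ ‖x - y‖ := by
  have hexp : ‖x - y‖ ^ 2 = ‖x - p‖ ^ 2 - 2 * ⟪x - p, y - p⟫_ℝ + ‖p - y‖ ^ 2 := by
    rw [show x - y = (x - p) - (y - p) by abel, norm_sub_sq_real, norm_sub_rev y p]
  rw [← pow_le_pow_iff_left₀ (norm_nonneg _) (norm_nonneg _) two_ne_zero]
  nlinarith [sq_nonneg ‖x - p‖]

end InnerProductSpace

theorem le_mul_rpow_min_of_le_add {d t C s r α β : ℝ} (hα : 0 ≤ α) (hβ : 0 ≤ β) (ht : 0 ≤ t)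
    (hC : 0 ≤ C) (hs : 0 ≤ s) (hr : 0 ≤ r) (hd : d ≤ C * t ^ α + s * t ^ β) (hdr : d ≤ r) :
    d ≤ (r + s + C) * t ^ min α β := by
  have hγ : 0 ≤ min α β := le_min hα hβ
  have htγ : 0 ≤ t ^ min α β := Real.rpow_nonneg ht _
  rcases le_or_gt t 1 with ht₁ | ht₁
  · have htα := Real.rpow_le_rpow_of_exponent_ge' ht ht₁ hγ (min_le_left α β)
    have htβ := Real.rpow_le_rpow_of_exponent_ge' ht ht₁ hγ (min_le_right α β)
    nlinarith [mul_le_mul_of_nonneg_left htα hC, mul_le_mul_of_nonneg_left htβ hs,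
      mul_nonneg hr htγ]
  · have h1 : 1 ≤ t ^ min α β := Real.one_le_rpow ht₁.le hγ
    nlinarith [mul_le_mul_of_nonneg_left h1 hr, mul_nonneg hs htγ, mul_nonneg hC htγ]

theorem le_sqrt_mul_rpow_of_one_div_mul_sq_le {a t κ : ℝ} (hκ : 0 < κ) (h : 1 / κ * a ^ 2 ≤ t) :
    a ≤ √κ * t ^ (1/2 : ℝ) := by
  rw [← Real.sqrt_eq_rpow, ← Real.sqrt_mul hκ.le]
  refine Real.le_sqrt_of_sq_le ?_
  rw [one_div_mul_eq_div, div_le_iff₀ hκ] at h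
  linarith

theorem LowerSemicontinuous.exists_forall_le_of_midpoint_le {E : Type*}
    [SeminormedAddCommGroup E] [Module ℝ E] [CompleteSpace E] {φ : E → EReal} (hφ : LowerSemicontinuous φ) {b : ℝ}
    (hb : ∀ z, (b : EReal) ≤ φ z) {z₀ : E} (hz₀ : φ z₀ ≠ ⊤) {c : ℝ} (hc : 0 < c)
    (hmid : ∀ (a a' : E) (u u' : ℝ), φ a ≤ u → φ a' ≤ u' →
      φ ((1/2 : ℝ) • a + (1/2 : ℝ) • a') ≤ (((u + u') / 2 - c * ‖a - a'‖ ^ 2 : ℝ) : EReal)) :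
    ∃ p, ∀ z, φ p ≤ φ z := by
  obtain ⟨μ, hμ⟩ : ∃ μ : ℝ, ⨅ z, φ z = μ :=
    ⟨_, (EReal.coe_toReal ((iInf_le φ z₀).trans_lt hz₀.lt_top).ne
      (ne_bot_of_le_ne_bot (EReal.coe_ne_bot b) (le_iInf hb))).symm⟩
  have hμ_le (z : E) : (μ : EReal) ≤ φ z := hμ ▸ iInf_le φ z
  have hε_pos (n : ℕ) : (0 : ℝ) < (1/2) ^ n := by positivity
  have hε_anti {N n : ℕ} (h : N ≤ n) : (1/2 : ℝ) ^ n ≤ (1/2) ^ N :=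
    pow_le_pow_of_le_one (by norm_num) (by norm_num) h
  have hε_lim : Tendsto (fun n : ℕ => (1/2 : ℝ) ^ n) atTop (𝓝 0) :=
    tendsto_pow_atTop_nhds_zero_of_lt_one (by norm_num) (by norm_num)
  have hseq (n : ℕ) : ∃ z, φ z ≤ ((μ + (1/2) ^ n : ℝ) : EReal) := by
    obtain ⟨z, hz⟩ :=
      iInf_lt_iff.1 (hμ ▸ EReal.coe_lt_coe_iff.2 (lt_add_of_pos_right μ (hε_pos n)))
    exact ⟨z, hz.le⟩
  choose u hu using hseq
  -- the midpoint of `u n` and `u k` cannot go below the infimum `μ`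
  have hu_dist (n k : ℕ) : c * dist (u n) (u k) ^ 2 ≤ ((1/2) ^ n + (1/2) ^ k) / 2 := by
    have := (hμ_le _).trans (hmid _ _ _ _ (hu n) (hu k))
    rw [dist_eq_norm]
    linarith [EReal.coe_le_coe_iff.1 this]
  have hcauchy : CauchySeq u := by
    refine cauchySeq_of_le_tendsto_0 (fun N => √((1/2) ^ N / c)) (fun n k N hn hk => ?_) ?_
    · rw [Real.le_sqrt dist_nonneg (by positivity), le_div_iff₀ hc, mul_comm]
      linarith [hu_dist n k, hε_anti hn, hε_anti hk]
    · simpa using (hε_lim.div_const c).sqrt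
  obtain ⟨p, hp⟩ := cauchySeq_tendsto_of_complete hcauchy
  have hp_le (N : ℕ) : φ p ≤ ((μ + (1/2) ^ N : ℝ) : EReal) :=
    (hφ.isClosed_preimage _).mem_of_tendsto hp <| eventually_atTop.2 ⟨N, fun n hn =>
      (hu n).trans (EReal.coe_le_coe_iff.2 (by linarith [hε_anti hn]))⟩
  have hlim : Tendsto (fun N : ℕ => ((μ + (1/2) ^ N : ℝ) : EReal)) atTop (𝓝 μ) :=
    (continuous_coe_real_ereal.tendsto μ).comp (by simpa using hε_lim.const_add μ)
  exact ⟨p, fun z => (ge_of_tendsto' hlim hp_le).trans (hμ_le z)⟩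

section ConvexEReal

variable {E : Type*} [AddCommGroup E] [Module ℝ E]

def ConvexEReal (f : E → EReal) : Prop :=
  ∀ x y : E, ∀ t : ℝ, 0 ≤ t → t ≤ 1 →
    f (t • x + (1 - t) • y) ≤ (t : EReal) * f x + ((1 - t : ℝ) : EReal) * f y

theorem ConvexEReal.le_coe_combo {f : E → EReal} (hf : ConvexEReal f) {a b : E} {u v t : ℝ}
    (ht₀ : 0 ≤ t) (ht₁ : t ≤ 1) (ha : f a ≤ u) (hb : f b ≤ v) :
    f (t • a + (1 - t) • b) ≤ ((t * u + (1 - t) * v : ℝ) : EReal) :=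
  calc f (t • a + (1 - t) • b) ≤ (t : EReal) * f a + ((1 - t : ℝ) : EReal) * f b := hf a b t ht₀ ht₁
    _ ≤ (t : EReal) * u + ((1 - t : ℝ) : EReal) * v := by gcongr
    _ = _ := by norm_cast

end ConvexEReal

section Prox

variable {X : Type*} [NormedAddCommGroup X] [InnerProductSpace ℝ X] {f : X → EReal}

theorem ConvexEReal.midpoint_add_sq_le (hf : ConvexEReal f) (c : ℝ) (x : X) {a a' : X}
    {u u' : ℝ} (ha : f a + ((c * ‖a - x‖ ^ 2 : ℝ) : EReal) ≤ u)
    (ha' : f a' + ((c * ‖a' - x‖ ^ 2 : ℝ) : EReal) ≤ u') :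
    f ((1/2 : ℝ) • a + (1/2 : ℝ) • a') +
        ((c * ‖(1/2 : ℝ) • a + (1/2 : ℝ) • a' - x‖ ^ 2 : ℝ) : EReal) ≤
      (((u + u') / 2 - c / 4 * ‖a - a'‖ ^ 2 : ℝ) : EReal) := by
  rw [EReal.add_coe_le_coe_iff] at ha ha' ⊢
  have h := hf.le_coe_combo (t := 1/2) (by norm_num) (by norm_num) ha ha'
  rw [show (1 - 1/2 : ℝ) = 1/2 by norm_num] at h
  refine h.trans (EReal.coe_le_coe_iff.2 (le_of_eq ?_))
  rw [norm_midpoint_sub_sq]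
  ring

theorem ConvexEReal.exists_forall_add_sq_le [CompleteSpace X] (hf : ConvexEReal f)
    (hlsc : LowerSemicontinuous f) {b : ℝ} (hb : ∀ z, (b : EReal) ≤ f z) {z₀ : X}
    (hz₀ : f z₀ ≠ ⊤) {c : ℝ} (hc : 0 < c) (x : X) :
    ∃ p, ∀ z, f p + ((c * ‖p - x‖ ^ 2 : ℝ) : EReal) ≤ f z + ((c * ‖z - x‖ ^ 2 : ℝ) : EReal) := by
  have hq (z : X) : (0 : EReal) ≤ ((c * ‖z - x‖ ^ 2 : ℝ) : EReal) :=
    EReal.coe_nonneg.2 (by positivity)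
  refine LowerSemicontinuous.exists_forall_le_of_midpoint_le ?_
    (fun z => (hb z).trans (le_add_of_nonneg_right (hq z)))
    (EReal.add_ne_top hz₀ (EReal.coe_ne_top _)) (by positivity : 0 < c / 4)
    fun a a' u u' ha ha' => hf.midpoint_add_sq_le c x ha ha'
  refine hlsc.add' (continuous_coe_real_ereal.comp (by fun_prop)).lowerSemicontinuous fun z => ?_
  exact EReal.continuousAt_add (.inr (EReal.coe_ne_bot _)) (.inr (EReal.coe_ne_top _))

theorem ConvexEReal.add_inner_le_of_forall_add_sq_le (hf : ConvexEReal f) {c : ℝ} {x p : X}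
    (hp : ∀ z, f p + ((c * ‖p - x‖ ^ 2 : ℝ) : EReal) ≤ f z + ((c * ‖z - x‖ ^ 2 : ℝ) : EReal))
    {P : ℝ} (hP : f p = P) {z : X} {u : ℝ} (hz : f z ≤ u) :
    P + 2 * c * ⟪x - p, z - p⟫_ℝ ≤ u := by
  -- compare `p` with the points `p + t • (z - p)` of the segment and let `t → 0⁺`
  have key : ∀ t ∈ Ioc (0 : ℝ) 1, P + 2 * c * ⟪x - p, z - p⟫_ℝ ≤ u + t * (c * ‖z - p‖ ^ 2) := by
    rintro t ⟨ht₀, ht₁⟩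
    have h := (hp (t • z + (1 - t) • p)).trans
      (add_le_add_left (hf.le_coe_combo ht₀.le ht₁ hz hP.le) _)
    rw [hP, ← EReal.coe_add, ← EReal.coe_add, EReal.coe_le_coe_iff,
      show t • z + (1 - t) • p - x = (p - x) + t • (z - p) by module, norm_add_sq_real,
      real_inner_smul_right, norm_smul, mul_pow, Real.norm_eq_abs, sq_abs] at h
    have hinner : ⟪x - p, z - p⟫_ℝ = -⟪p - x, z - p⟫_ℝ := by rw [← inner_neg_left, neg_sub]
    refine le_of_mul_le_mul_left ?_ ht₀
    rw [hinner]
    linarith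
  have hlim : Tendsto (fun t : ℝ => u + t * (c * ‖z - p‖ ^ 2)) (𝓝[>] 0) (𝓝 u) :=
    (Continuous.tendsto' (by fun_prop) 0 u (by simp)).mono_left nhdsWithin_le_nhds
  exact ge_of_tendsto hlim (eventually_of_mem (Ioc_mem_nhdsGT one_pos) key)

theorem ConvexEReal.norm_sub_le_of_forall_add_sq_le (hf : ConvexEReal f) {c : ℝ} (hc : 0 < c)
    {x p : X}
    (hp : ∀ z, f p + ((c * ‖p - x‖ ^ 2 : ℝ) : EReal) ≤ f z + ((c * ‖z - x‖ ^ 2 : ℝ) : EReal))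
    {P : ℝ} (hP : f p = P) {y : X} (hy : f y ≤ P) :
    ‖p - y‖ ≤ ‖x - y‖ := by
  have := hf.add_inner_le_of_forall_add_sq_le hp hP hy
  exact norm_sub_le_norm_sub_of_inner_nonpos (by nlinarith)

end Prox

theorem iInf_add_sq_eq_of_forall_le {X : Type*} [SeminormedAddCommGroup X] {f : X → EReal}
    {c : ℝ} (hc : 0 ≤ c) {y : X} (hy : ∀ z, f y ≤ f z) :
    ⨅ z, f z + ((c * ‖z - y‖ ^ 2 : ℝ) : EReal) = f y :=
  le_antisymm ((iInf_le _ y).trans (by simp)) <| le_iInf fun z =>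
    (hy z).trans (le_add_of_nonneg_right (EReal.coe_nonneg.2 (by positivity)))

theorem stmt_7_general
    {X : Type*} [NormedAddCommGroup X] [InnerProductSpace ℝ X] [CompleteSpace X]
    (f : X → EReal)
    (hproper : (∀ x, f x ≠ ⊥) ∧ ∃ x, f x ≠ ⊤)
    (hlsc : LowerSemicontinuous f)
    (hconv : ∀ x y : X, ∀ t : ℝ, 0 ≤ t → t ≤ 1 →
      f (t • x + (1 - t) • y) ≤ (t : EReal) * f x + ((1 - t : ℝ) : EReal) * f y)
    (lam : ℝ) (hlam : 0 < lam)
    (M : X → EReal)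
    (hM : ∀ x, M x = ⨅ z : X, (f z + ((1/(2*lam) * ‖z - x‖^2 : ℝ) : EReal)))
    (S : Set X) (hS : S = {x | ∀ y, f x ≤ f y})
    (xb : X) (hxb : xb ∈ S)
    (C r : ℝ) (hC : 0 < C) (hr : 0 < r)
    (η : EReal)
    (α : ℝ) (hα0 : 0 < α)
    (hgrowth : ∀ x ∈ ball xb r, f xb ≤ f x → f x < f xb + η →
      infDist x S ≤ C * ((f x).toReal - (f xb).toReal) ^ α) :
    ∃ Ct : ℝ, 0 < Ct ∧ ∀ x ∈ ball xb r, M xb ≤ M x → M x < M xb + η →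
      infDist x S ≤ Ct * ((M x).toReal - (M xb).toReal) ^ (min α (1/2 : ℝ)) := by
  obtain ⟨hbot, z₀, hz₀⟩ := hproper
  have hmin : ∀ z, f xb ≤ f z := by subst hS; exact hxb
  obtain ⟨F₀, hF₀⟩ : ∃ F₀ : ℝ, f xb = F₀ :=
    ⟨_, (EReal.coe_toReal (ne_top_of_le_ne_top hz₀ (hmin z₀)) (hbot xb)).symm⟩
  set c := 1 / (2 * lam)
  have hc : 0 < c := by positivity
  have hMxb : M xb = F₀ := by rw [hM, iInf_add_sq_eq_of_forall_le hc.le hmin, hF₀]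
  refine ⟨r + √(2 * lam) + C, by positivity, fun x hx _ hMlt => ?_⟩
  obtain ⟨p, hp⟩ := ConvexEReal.exists_forall_add_sq_le hconv hlsc (b := F₀) (hF₀ ▸ hmin) hz₀ hc x
  have hMx : M x = f p + ((c * ‖p - x‖ ^ 2 : ℝ) : EReal) := by
    rw [hM]; exact le_antisymm (iInf_le _ p) (le_iInf hp)
  have hq : 0 ≤ c * ‖p - x‖ ^ 2 := by positivity
  have hfp_le : f p ≤ M x := hMx ▸ le_add_of_nonneg_right (EReal.coe_nonneg.2 hq)
  obtain ⟨P, hP⟩ : ∃ P : ℝ, f p = P :=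
    ⟨_, (EReal.coe_toReal (ne_top_of_le_ne_top (hMlt.trans_le le_top).ne hfp_le) (hbot p)).symm⟩
  have hF₀P : F₀ ≤ P := EReal.coe_le_coe_iff.1 (hF₀ ▸ hP ▸ hmin p)
  have hp_ball : p ∈ ball xb r := mem_ball_iff_norm.2 <|
    (ConvexEReal.norm_sub_le_of_forall_add_sq_le hconv hc hp hP (hP ▸ hmin p)).trans_lt
      (mem_ball_iff_norm.1 hx)
  have hgp := hgrowth p hp_ball (hmin p) (hfp_le.trans_lt (by rwa [hMxb, ← hF₀] at hMlt))
  rw [hP, hF₀, EReal.toReal_coe, EReal.toReal_coe] at hgp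
  rw [hMx, hP, hMxb, ← EReal.coe_add, EReal.toReal_coe, EReal.toReal_coe]
  set t := P + c * ‖p - x‖ ^ 2 - F₀
  refine le_mul_rpow_min_of_le_add hα0.le (by norm_num) (by linarith) hC.le (by positivity) hr.le
    ?_ ((infDist_le_dist_of_mem hxb).trans (mem_ball.1 hx).le)
  calc infDist x S ≤ infDist p S + dist x p := infDist_le_infDist_add_dist
    _ ≤ C * t ^ α + √(2 * lam) * t ^ (1/2 : ℝ) := by
      gcongr
      · exact hgp.trans (by gcongr; linarith)
      · rw [dist_comm, dist_eq_norm]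
        exact le_sqrt_mul_rpow_of_one_div_mul_sq_le (by positivity) (by linarith)

/-- Hölder growth error bound transfers from `f` to its Moreau envelope
`M_{λf}(x) = inf_z { f z + ‖z - x‖²/(2λ) }`, with exponent `min{α, 1/2}`
(Corollary 2.2 / prop:GEB). Here `η ∈ (0, ∞]` is encoded as `η : EReal` with `0 < η`. -/
theorem stmt_7
    {X : Type*} [NormedAddCommGroup X] [InnerProductSpace ℝ X] [CompleteSpace X]
    (f : X → EReal)
    (hproper : (∀ x, f x ≠ ⊥) ∧ ∃ x, f x ≠ ⊤)
    (hlsc : LowerSemicontinuous f)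
    (hconv : ∀ x y : X, ∀ t : ℝ, 0 ≤ t → t ≤ 1 →
      f (t • x + (1 - t) • y) ≤ (t : EReal) * f x + ((1 - t : ℝ) : EReal) * f y)
    (lam : ℝ) (hlam : 0 < lam)
    (M : X → EReal)
    (hM : ∀ x, M x = ⨅ z : X, (f z + ((1/(2*lam) * ‖z - x‖^2 : ℝ) : EReal)))
    (S : Set X) (hS : S = {x | ∀ y, f x ≤ f y}) (hSne : S.Nonempty)
    (xb : X) (hxb : xb ∈ S)
    (C r : ℝ) (hC : 0 < C) (hr : 0 < r)
    (η : EReal) (hη : 0 < η)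
    (α : ℝ) (hα0 : 0 < α) (hα1 : α ≤ 1)
    (hgrowth : ∀ x ∈ ball xb r, f xb ≤ f x → f x < f xb + η →
      infDist x S ≤ C * ((f x).toReal - (f xb).toReal) ^ α) :
    ∃ Ct : ℝ, 0 < Ct ∧ ∀ x ∈ ball xb r, M xb ≤ M x → M x < M xb + η →
      infDist x S ≤ Ct * ((M x).toReal - (M xb).toReal) ^ (min α (1/2 : ℝ)) :=
  stmt_7_general f hproper hlsc hconv lam hlam M hM S hS xb hxb C r hC hr η α hα0 hgrowth
end

section
/- Let X be a Hilbert space and f : X → (-∞, ∞] proper and weakly lower semicontinuous, x̄ ∈ dom(f). Suppose there exist r > 0, η > 0 and a desingularizing function φ ∈ C[0,η) ∩ C¹(0,η), φ(0) = 0, φ concave, φ' > 0, such that φ'(f(x) - f(x̄)) · d(0, ∂̂f(x)) ≥ 1 for all x ∈ B_r(x̄) with f(x̄) < f(x) < f(x̄) + η. Then there exist 0 < r̃ ≤ r and 0 < η̃ ≤ η such that d(x, S) ≤ 2 φ(f(x) - f(x̄)) for all x ∈ B_{r̃}(x̄) with f(x̄) ≤ f(x) < f(x̄) + η̃, where S =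 {x : f(x) ≤ f(x̄)}. -/
/-!
Truncate the excess of `f` over `f x̄` to `[0, c]` with `c < η` and compose with `φ`: the
resulting real function `g` is lower semicontinuous. Ekeland's principle with slope `3/5` at `x`
gives `z` with `(3/5) ‖z - x‖ ≤ φ (f x - f x̄)` at which `g` has slope at most `3/5`. If
`g z = 0`, then `z ∈ S` and the bound follows. Otherwise a Borwein–Preiss variational principle
with quadratic penalties, applied after smoothing the cone `‖· - z‖` at its vertex, yields a
nearby point `v` where `g` has a proximal subgradient of norm `< 1`. Since `φ` is concave, dividing
it by `φ'` gives a Fréchet subgradient of `f` at `v`, which contradicts the KL inequality.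
-/

open Metric Set Filter

/-- The Fréchet subdifferential of a proper `EReal`-valued function. -/
def FrechetSubdiff {X : Type*} [NormedAddCommGroup X] [InnerProductSpace ℝ X]
    (g : X → EReal) (x : X) : Set X :=
  {ξ | g x ≠ ⊤ ∧ ∀ ε : ℝ, 0 < ε → ∀ᶠ y in nhdsWithin x {x}ᶜ,
    g x + (((inner ℝ ξ (y - x) : ℝ) - ε * ‖y - x‖ : ℝ) : EReal) ≤ g y}

open scoped RealInnerProductSpace Topology

lemma ConcaveOn.le_add_mul_sub_of_hasDerivAt {S : Set ℝ} {φ : ℝ → ℝ} {s u d : ℝ}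
    (hφ : ConcaveOn ℝ S φ) (hs : s ∈ S) (hu : u ∈ S) (hd : HasDerivAt φ d s) :
    φ u ≤ φ s + d * (u - s) := by
  rcases lt_trichotomy u s with hus | rfl | hsu
  · have := hφ.le_slope_of_hasDerivAt hu hs hus hd
    rw [slope_def_field, le_div_iff₀ (sub_pos.2 hus)] at this
    linarith
  · simp
  · have := hφ.slope_le_of_hasDerivAt hs hu hsu hd
    rw [slope_def_field, div_le_iff₀ (sub_pos.2 hsu)] at this
    linarith

lemma Real.sqrt_le_sqrt_add_sub_div {a b : ℝ} (ha : 0 < a) (hb : 0 ≤ b) :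
    √b ≤ √a + (b - a) / (2 * √a) := by
  have hsa := Real.sqrt_pos.2 ha
  have : √a + (b - a) / (2 * √a) - √b = (√b - √a) ^ 2 / (2 * √a) := by
    field_simp
    rw [sub_sq, Real.sq_sqrt ha.le, Real.sq_sqrt hb]
    ring
  linarith [show 0 ≤ (√b - √a) ^ 2 / (2 * √a) by positivity]

lemma LowerSemicontinuous.le_of_tendsto {X : Type*} [TopologicalSpace X] {F : X → ℝ}
    (hF : LowerSemicontinuous F) {x : ℕ → X} {v : X} {b : ℕ → ℝ} {B : ℝ}
    (hx : Tendsto x atTop (𝓝 v)) (hb : Tendsto b atTop (𝓝 B)) (hle : ∀ n, F (x n) ≤ b n) :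
    F v ≤ B := by
  refine le_of_forall_gt_imp_ge_of_dense fun B' hB' => ?_
  refine (hF.isClosed_preimage B').mem_of_tendsto hx ?_
  filter_upwards [hb.eventually_le_const hB'] with n hn using (hle n).trans hn

lemma exists_forall_le_add_of_bddBelow {α : Type*} {g : α → ℝ} {s : Set α} (hs : s.Nonempty)
    (hg : BddBelow (g '' s)) {ε : ℝ} (hε : 0 < ε) : ∃ a ∈ s, ∀ y ∈ s, g a ≤ g y + ε := by
  obtain ⟨_, ⟨a, ha, rfl⟩, hlt⟩ := Real.lt_sInf_add_pos (hs.image g) hε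
  exact ⟨a, ha, fun y hy => by linarith [csInf_le hg (mem_image_of_mem g hy)]⟩

/-- Ekeland's variational principle. -/
theorem LowerSemicontinuous.exists_forall_le_add_mul_dist {X : Type*} [MetricSpace X]
    [CompleteSpace X] {g : X → ℝ} (hg : LowerSemicontinuous g) (hbdd : BddBelow (range g))
    (x : X) {κ : ℝ} (hκ : 0 < κ) :
    ∃ w, g w + κ * dist w x ≤ g x ∧ ∀ y, g w ≤ g y + κ * dist y w := by
  set S : X → Set X := fun c => {a | g a + κ * dist a c ≤ g c}
  have self_mem (c : X) : c ∈ S c := by simp [S]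
  have subset_of_mem {a c : X} (ha : a ∈ S c) : S a ⊆ S c := fun y hy => by
    simp only [S, mem_ofPred_eq] at ha hy ⊢
    nlinarith [dist_triangle y a c]
  have isClosed_S (c : X) : IsClosed (S c) :=
    (hg.add (continuous_const.mul (continuous_id.dist continuous_const)).lowerSemicontinuous)
      |>.isClosed_preimage (g c)
  have hnext (n : ℕ) (c : X) : ∃ a ∈ S c, ∀ y ∈ S c, g a ≤ g y + κ * (1 / 2) ^ n :=
    exists_forall_le_add_of_bddBelow ⟨c, self_mem c⟩ (hbdd.mono (image_subset_range _ _))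
      (by positivity)
  choose next next_mem next_le using hnext
  set z : ℕ → X := fun n => Nat.rec x (fun n c => next n c) n
  have z_succ (n : ℕ) : z (n + 1) = next n (z n) := rfl
  have S_anti : Antitone fun n => S (z n) :=
    antitone_nat_of_succ_le fun n => z_succ n ▸ subset_of_mem (next_mem n (z n))
  have geom : Tendsto (fun n : ℕ => (1 / 2 : ℝ) ^ n) atTop (𝓝 0) :=
    tendsto_pow_atTop_nhds_zero_of_lt_one (by norm_num) (by norm_num)
  -- points of `S (z (n+1))` nearly minimize `g` on `S (z n)`, hence lie close to `z (n+1)`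
  have dist_le {n : ℕ} {y : X} (hy : y ∈ S (z (n + 1))) : dist y (z (n + 1)) ≤ (1 / 2) ^ n := by
    have h1 := next_le n (z n) y (S_anti n.le_succ hy)
    have h2 : g y + κ * dist y (z (n + 1)) ≤ g (z (n + 1)) := hy
    rw [← z_succ] at h1
    nlinarith
  have hcauchy : CauchySeq fun n => z (n + 1) := by
    refine cauchySeq_of_le_tendsto_0 (fun N => 2 * (1 / 2) ^ N) (fun n m N hn hm => ?_)
      (by simpa using geom.const_mul 2)
    have hn' := dist_le (S_anti (Nat.succ_le_succ hn) (self_mem (z (n + 1))))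
    have hm' := dist_le (S_anti (Nat.succ_le_succ hm) (self_mem (z (m + 1))))
    linarith [dist_triangle_right (z (n + 1)) (z (m + 1)) (z (N + 1))]
  obtain ⟨w, hw⟩ := cauchySeq_tendsto_of_complete hcauchy
  have w_mem (n : ℕ) : w ∈ S (z n) :=
    (isClosed_S _).mem_of_tendsto hw (eventually_atTop.2 ⟨n, fun m hm =>
      S_anti (show n ≤ m + 1 by omega) (self_mem (z (m + 1)))⟩)
  refine ⟨w, w_mem 0, fun y => le_of_not_gt fun hy => ?_⟩
  have hyS (n : ℕ) : y ∈ S (z (n + 1)) :=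
    subset_of_mem (w_mem (n + 1)) (show g y + κ * dist y w ≤ g w by linarith)
  have : Tendsto (fun n => z (n + 1)) atTop (𝓝 y) :=
    tendsto_iff_dist_tendsto_zero.2 <| squeeze_zero (fun _ => dist_nonneg)
      (fun n => (dist_comm _ _).trans_le (dist_le (hyS n))) geom
  obtain rfl := tendsto_nhds_unique this hw
  simp at hy

section BorweinPreiss

variable {X : Type*} [PseudoMetricSpace X]

-- The weights `A / 2 / 2 ^ i` sum to `A`; the tolerances `ε / 8 ^ n` shrink fast enough against
-- them to make the steps of the sequence geometric.
lemma exists_seq_add_penalty_le_add (F : X → ℝ) {z : X} {ε A : ℝ} (hε : 0 < ε) (hA : 0 ≤ A)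
    (hz : ∀ y, F z ≤ F y + ε) :
    ∃ x : ℕ → X, x 0 = z ∧ ∀ n y,
      F (x n) + ∑ i ∈ Finset.range n, A / 2 / 2 ^ i * dist (x n) (x i) ^ 2 ≤
        F y + ∑ i ∈ Finset.range n, A / 2 / 2 ^ i * dist y (x i) ^ 2 + ε / 8 ^ n := by
  have hnext (n : ℕ) (P : X → ℝ) : ∃ a, 0 ≤ P → ∀ y, F a + P a ≤ F y + P y + ε / 8 ^ (n + 1) := by
    by_cases hP : 0 ≤ P
    · obtain ⟨a, -, ha⟩ := exists_forall_le_add_of_bddBelow (g := F + P) (s := univ)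
        (ε := ε / 8 ^ (n + 1)) ⟨z, trivial⟩
        ⟨F z - ε, by
          rintro _ ⟨y, -, rfl⟩
          exact show F z - ε ≤ F y + P y by linarith [hz y, show (0 : ℝ) ≤ P y from hP y]⟩
        (by positivity)
      exact ⟨a, fun _ y => ha y trivial⟩
    · exact ⟨z, fun h => absurd h hP⟩
  choose next hnext using hnext
  -- the state at step `n` is the current point together with the accumulated penalty
  obtain ⟨st, st_zero, st_succ⟩ : ∃ st : ℕ → X × (X → ℝ), st 0 = (z, 0) ∧ ∀ n,
      st (n + 1) = (next n ((st n).2 + fun y => A / 2 / 2 ^ n * dist y (st n).1 ^ 2),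
        (st n).2 + fun y => A / 2 / 2 ^ n * dist y (st n).1 ^ 2) :=
    ⟨fun n => Nat.rec (z, 0) (fun n p => (next n (p.2 + fun y => A / 2 / 2 ^ n * dist y p.1 ^ 2),
      p.2 + fun y => A / 2 / 2 ^ n * dist y p.1 ^ 2)) n, rfl, fun _ => rfl⟩
  have penalty_eq (n : ℕ) :
      (st n).2 = fun y => ∑ i ∈ Finset.range n, A / 2 / 2 ^ i * dist y (st i).1 ^ 2 := by
    induction n with
    | zero => funext y; simp [st_zero]
    | succ n ih => funext y; simp [st_succ, ih, Finset.sum_range_succ]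
  refine ⟨fun n => (st n).1, by simp [st_zero], ?_⟩
  rintro (_ | n) y
  · simpa [st_zero] using hz y
  · have hP : 0 ≤ (st (n + 1)).2 := by
      rw [penalty_eq]; exact fun y => Finset.sum_nonneg fun i _ => by positivity
    have hfst : next n (st (n + 1)).2 = (st (n + 1)).1 := by rw [st_succ]
    have := hnext n _ hP y
    rw [hfst, penalty_eq] at this
    exact this

lemma dist_succ_le_of_add_penalty_le {F : X → ℝ} {x : ℕ → X} {ε A ρ : ℝ} (hε : 0 < ε)
    (hρ : 0 < ρ) (hA : 16 * ε ≤ A * ρ ^ 2)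
    (hx : ∀ n y, F (x n) + ∑ i ∈ Finset.range n, A / 2 / 2 ^ i * dist (x n) (x i) ^ 2 ≤
        F y + ∑ i ∈ Finset.range n, A / 2 / 2 ^ i * dist y (x i) ^ 2 + ε / 8 ^ n) (n : ℕ) :
    dist (x n) (x (n + 1)) ≤ ρ / 2 / 2 ^ n := by
  have h1 := hx (n + 1) (x n)
  have h2 := hx n (x (n + 1))
  rw [Finset.sum_range_succ, Finset.sum_range_succ, dist_self, zero_pow two_ne_zero,
    mul_zero, add_zero] at h1
  set p : ℝ := 2 ^ n with hp
  have hp0 : 0 < p := by positivity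
  have h8 : (8 : ℝ) ^ n = p ^ 3 := by rw [hp, ← pow_mul, mul_comm, pow_mul]; norm_num
  rw [pow_succ (8 : ℝ) n, h8] at h1
  rw [h8] at h2
  rw [dist_comm]
  set d := dist (x (n + 1)) (x n)
  have key : A / 2 / p * d ^ 2 ≤ 2 * ε / p ^ 3 := by
    have : ε / (p ^ 3 * 8) ≤ ε / p ^ 3 := div_le_div_of_nonneg_left hε.le (by positivity)
      (by linarith [pow_pos hp0 3])
    rw [mul_div_assoc]
    linarith
  rw [div_div, div_mul_eq_mul_div, div_le_div_iff₀ (by positivity) (by positivity)] at key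
  have hA0 : 0 < A := pos_of_mul_pos_left (by linarith) (sq_nonneg ρ)
  have hdp : (d * p) ^ 2 ≤ (ρ / 2) ^ 2 := by
    refine le_of_mul_le_mul_left ?_ hA0
    have : A * d ^ 2 * p ^ 2 ≤ 4 * ε := by
      refine le_of_mul_le_mul_right ?_ hp0
      linarith
    linarith
  rw [le_div_iff₀ hp0]
  exact (pow_le_pow_iff_left₀ (by positivity) (by positivity) two_ne_zero).1 hdp

end BorweinPreiss

section Hilbert

variable {X : Type*} [NormedAddCommGroup X] [InnerProductSpace ℝ X]

def IsProxSubgradient (F : X → ℝ) (v ξ : X) (M : ℝ) : Prop :=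
  ∀ y, F v + ⟪ξ, y - v⟫ - M * ‖y - v‖ ^ 2 ≤ F y

namespace IsProxSubgradient

variable {F : X → ℝ} {v ξ : X} {M : ℝ}

lemma le_add (h : IsProxSubgradient F v ξ M) (y : X) :
    F v ≤ F y + ‖ξ‖ * ‖y - v‖ + M * ‖y - v‖ ^ 2 := by
  linarith [h y, (abs_le.1 (abs_real_inner_le_norm ξ (y - v))).1]

lemma const_add (h : IsProxSubgradient F v ξ M) (a : ℝ) :
    IsProxSubgradient (fun y => a + F y) v ξ M :=
  fun y => by linarith [h y]

lemma of_comp {φ : ℝ → ℝ} {m : X → ℝ} {d : ℝ} (h : IsProxSubgradient (φ ∘ m) v ξ M) (hd : 0 < d)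
    (htan : ∀ y, φ (m y) ≤ φ (m v) + d * (m y - m v)) :
    IsProxSubgradient m v (d⁻¹ • ξ) (M / d) := fun y => by
  have h1 : φ (m v) + ⟪ξ, y - v⟫ - M * ‖y - v‖ ^ 2 ≤ φ (m y) := h y
  have h2 := htan y
  refine le_of_mul_le_mul_left ?_ hd
  calc d * (m v + ⟪d⁻¹ • ξ, y - v⟫ - M / d * ‖y - v‖ ^ 2)
      = d * m v + ⟪ξ, y - v⟫ - M * ‖y - v‖ ^ 2 := by
        rw [real_inner_smul_left]; field_simp
    _ ≤ d * m y := by linarith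

lemma mem_frechetSubdiff {f : X → EReal} {u : X → ℝ} (hu : IsProxSubgradient u v ξ M)
    (hfv : f v = u v) (hle : ∀ᶠ y in 𝓝 v, (u y : EReal) ≤ f y) :
    ξ ∈ FrechetSubdiff f v := by
  refine ⟨hfv ▸ EReal.coe_ne_top _, fun ε hε => ?_⟩
  have hsmall : ∀ᶠ y in 𝓝 v, M * ‖y - v‖ ≤ ε := by
    have : Tendsto (fun y => M * ‖y - v‖) (𝓝 v) (𝓝 (M * ‖v - v‖)) :=
      Continuous.tendsto (by fun_prop) v
    rw [sub_self, norm_zero, mul_zero] at this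
    exact this.eventually_le_const hε
  filter_upwards [eventually_nhdsWithin_of_eventually_nhds (hle.and hsmall)] with y hy
  rw [hfv, ← EReal.coe_add]
  refine le_trans (EReal.coe_le_coe_iff.2 ?_) hy.1
  have := mul_le_mul_of_nonneg_right hy.2 (norm_nonneg (y - v))
  linarith [hu y]

end IsProxSubgradient

lemma sum_mul_norm_sub_sq_sub (x : ℕ → X) (t : ℕ → ℝ) (s : Finset ℕ) (u y : X) :
    ∑ i ∈ s, t i * ‖y - x i‖ ^ 2 - ∑ i ∈ s, t i * ‖u - x i‖ ^ 2 =
      2 * ⟪∑ i ∈ s, t i • (u - x i), y - u⟫ + (∑ i ∈ s, t i) * ‖y - u‖ ^ 2 := by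
  rw [← Finset.sum_sub_distrib, sum_inner, Finset.mul_sum, Finset.sum_mul,
    ← Finset.sum_add_distrib]
  refine Finset.sum_congr rfl fun i _ => ?_
  rw [show y - x i = (y - u) + (u - x i) by abel, norm_add_sq_real, real_inner_smul_left,
    real_inner_comm]
  ring

lemma exists_tendsto_sum_smul_sub [CompleteSpace X] {x : ℕ → X} {v z : X} {A ρ : ℝ}
    (hA : 0 ≤ A) (hv : Tendsto x atTop (𝓝 v)) (hvz : ‖v - z‖ ≤ ρ) (hxz : ∀ n, ‖x n - z‖ ≤ ρ) :
    ∃ ζ, ‖ζ‖ ≤ 2 * A * ρ ∧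
      Tendsto (fun n => ∑ i ∈ Finset.range n, (A / 2 / 2 ^ i) • (x n - x i)) atTop (𝓝 ζ) := by
  have ht : HasSum (fun i : ℕ => A / 2 / 2 ^ i) A := hasSum_geometric_two' A
  have hbound (i : ℕ) : ‖(A / 2 / 2 ^ i) • (v - x i)‖ ≤ A / 2 / 2 ^ i * (2 * ρ) := by
    rw [norm_smul, Real.norm_of_nonneg (by positivity)]
    gcongr
    calc ‖v - x i‖ = ‖(v - z) - (x i - z)‖ := by congr 1; abel
      _ ≤ ‖v - z‖ + ‖x i - z‖ := norm_sub_le _ _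
      _ ≤ 2 * ρ := by linarith [hxz i]
  obtain ⟨ζ, hζ⟩ := Summable.of_norm_bounded (ht.mul_right (2 * ρ)).summable hbound
  refine ⟨ζ, by linarith [hζ.norm_le_of_bounded (ht.mul_right (2 * ρ)) hbound], ?_⟩
  have hsplit (n : ℕ) : ∑ i ∈ Finset.range n, (A / 2 / 2 ^ i) • (x n - x i) =
      (∑ i ∈ Finset.range n, A / 2 / 2 ^ i) • (x n - v) +
        ∑ i ∈ Finset.range n, (A / 2 / 2 ^ i) • (v - x i) := by
    rw [Finset.sum_smul, ← Finset.sum_add_distrib]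
    exact Finset.sum_congr rfl fun i _ => by rw [← smul_add, sub_add_sub_cancel]
  simp only [hsplit]
  simpa using (ht.tendsto_sum_nat.smul (hv.sub_const v)).add hζ.tendsto_sum_nat

/-- The Borwein–Preiss variational principle with quadratic penalties. -/
theorem LowerSemicontinuous.exists_isProxSubgradient_of_forall_le_add [CompleteSpace X]
    {F : X → ℝ} (hF : LowerSemicontinuous F) {z : X} {ε A ρ : ℝ} (hε : 0 < ε) (hρ : 0 < ρ)
    (hA : 16 * ε ≤ A * ρ ^ 2) (hz : ∀ y, F z ≤ F y + ε) :
    ∃ v ξ, ‖v - z‖ ≤ ρ ∧ ‖ξ‖ ≤ 4 * A * ρ ∧ IsProxSubgradient F v ξ A := by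
  have hA0 : 0 < A := pos_of_mul_pos_left (by linarith) (sq_nonneg ρ)
  obtain ⟨x, hx0, hx⟩ := exists_seq_add_penalty_le_add F hε hA0.le hz
  have hstep := dist_succ_le_of_add_penalty_le hε hρ hA hx
  obtain ⟨v, hv⟩ := cauchySeq_tendsto_of_complete (cauchySeq_of_le_geometric_two hstep)
  have hvz : ‖v - z‖ ≤ ρ := by
    rw [← dist_eq_norm, dist_comm, ← hx0]
    exact dist_le_of_le_geometric_two_of_tendsto₀ hstep hv
  have hxz (n : ℕ) : ‖x n - z‖ ≤ ρ := by
    rw [← dist_eq_norm, dist_comm, ← hx0]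
    exact (dist_le_range_sum_of_dist_le n fun {k} _ => hstep k).trans
      (sum_le_hasSum _ (fun _ _ => by positivity) (hasSum_geometric_two' ρ))
  obtain ⟨ζ, hζ, hlim⟩ := exists_tendsto_sum_smul_sub hA0.le hv hvz hxz
  refine ⟨v, -(2 : ℝ) • ζ, hvz, ?_, fun y => ?_⟩
  · rw [norm_smul, Real.norm_of_nonpos (by norm_num)]
    linarith
  -- pass to the limit in the near-minimality of `x n`, written via the Hilbert-space identity
  have hFv : F v ≤ F y + 2 * ⟪ζ, y - v⟫ + A * ‖y - v‖ ^ 2 + 0 := by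
    refine hF.le_of_tendsto (b := fun n => F y + 2 * ⟪∑ i ∈ Finset.range n,
      (A / 2 / 2 ^ i) • (x n - x i), y - x n⟫ + (∑ i ∈ Finset.range n, A / 2 / 2 ^ i) *
        ‖y - x n‖ ^ 2 + ε / 8 ^ n) hv ?_ fun n => ?_
    · exact ((((hlim.inner (tendsto_const_nhds.sub hv)).const_mul 2).const_add (F y)).add
        ((hasSum_geometric_two' A).tendsto_sum_nat.mul
          ((tendsto_const_nhds.sub hv).norm.pow 2))).add
        (tendsto_const_nhds.div_atTop (tendsto_pow_atTop_atTop_of_one_lt (by norm_num)))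
    · have := hx n y
      have hid := sum_mul_norm_sub_sq_sub x (fun i => A / 2 / 2 ^ i) (Finset.range n) (x n) y
      simp only [dist_eq_norm] at this
      linarith
  rw [real_inner_smul_left]
  linarith

lemma sqrt_sq_add_norm_sub_sq_le {δ : ℝ} (hδ : 0 < δ) (z v y : X) :
    √(δ ^ 2 + ‖y - z‖ ^ 2) ≤ √(δ ^ 2 + ‖v - z‖ ^ 2) +
      ⟪(√(δ ^ 2 + ‖v - z‖ ^ 2))⁻¹ • (v - z), y - v⟫ + ‖y - v‖ ^ 2 / (2 * δ) := by
  set a := δ ^ 2 + ‖v - z‖ ^ 2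
  have ha : 0 < a := by positivity
  have hδa : δ ≤ √a := Real.le_sqrt_of_sq_le (by simp [a])
  have hba : δ ^ 2 + ‖y - z‖ ^ 2 - a = 2 * ⟪v - z, y - v⟫ + ‖y - v‖ ^ 2 := by
    rw [show y - z = (y - v) + (v - z) by abel, norm_add_sq_real, real_inner_comm]
    ring
  refine (Real.sqrt_le_sqrt_add_sub_div ha (by positivity)).trans ?_
  rw [hba, real_inner_smul_left, add_div, add_assoc]
  gcongr
  rw [mul_div_mul_left _ _ two_ne_zero, inv_mul_eq_div]

theorem LowerSemicontinuous.exists_isProxSubgradient_of_forall_le_add_mul_norm [CompleteSpace X]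
    {g : X → ℝ} (hg : LowerSemicontinuous g) {z : X} {α ρ γ : ℝ} (hα : 0 < α) (hρ : 0 < ρ)
    (hγ : 0 < γ) (hz : ∀ y, g z ≤ g y + α * ‖y - z‖) :
    ∃ v ξ M, ‖v - z‖ ≤ ρ ∧ g v ≤ g z + γ ∧ ‖ξ‖ ≤ α + γ ∧ IsProxSubgradient g v ξ M := by
  set ρ' := min ρ 1
  have hρ' : 0 < ρ' := lt_min hρ one_pos
  have hρ'1 : ρ' ≤ 1 := min_le_right _ _
  set A := γ / 5
  have hγA : γ = 5 * A := by ring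
  set δ := A * ρ' ^ 2 / (16 * α)
  have hδ : 0 < δ := by positivity
  -- `θ` smooths the cone `‖· - z‖` at its vertex, making `z` an `α δ`-minimizer of `g + α θ`
  set θ : X → ℝ := fun y => √(δ ^ 2 + ‖y - z‖ ^ 2)
  have norm_le_θ (y : X) : ‖y - z‖ ≤ θ y := Real.le_sqrt_of_sq_le (by linarith [sq_nonneg δ])
  have δ_le_θ (y : X) : δ ≤ θ y := Real.le_sqrt_of_sq_le (by linarith [sq_nonneg ‖y - z‖])
  have θ_z : θ z = δ := by simp [θ, Real.sqrt_sq hδ.le]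
  obtain ⟨v, ξ, hvz, hξ, hprox⟩ := (hg.add (Continuous.lowerSemicontinuous (by fun_prop) :
      LowerSemicontinuous fun y => α * θ y)).exists_isProxSubgradient_of_forall_le_add
    (ε := α * δ) (A := A) (ρ := ρ') (by positivity) hρ' (le_of_eq (by simp only [δ]; field_simp))
    (fun y => by nlinarith [hz y, norm_le_θ y])
  set ζ := (θ v)⁻¹ • (v - z)
  have hζ : ‖ζ‖ ≤ 1 := by
    rw [norm_smul, norm_inv, Real.norm_of_nonneg (Real.sqrt_nonneg _)]
    exact inv_mul_le_one_of_le₀ (norm_le_θ v) (Real.sqrt_nonneg _)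
  refine ⟨v, ξ - α • ζ, A + α / (2 * δ), hvz.trans (min_le_left _ _), ?_, ?_, fun y => ?_⟩
  · have h : g v + α * θ v ≤ g z + α * θ z + ‖ξ‖ * ‖z - v‖ + A * ‖z - v‖ ^ 2 := hprox.le_add z
    rw [norm_sub_rev, θ_z] at h
    have : ‖ξ‖ * ‖v - z‖ ≤ 4 * A * ρ' * ρ' := by gcongr
    have : A * ‖v - z‖ ^ 2 ≤ A * ρ' ^ 2 := by gcongr
    have : A * ρ' ^ 2 ≤ A := mul_le_of_le_one_right (by positivity) (pow_le_one₀ hρ'.le hρ'1)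
    linarith [mul_le_mul_of_nonneg_left (δ_le_θ v) hα.le]
  · calc ‖ξ - α • ζ‖ ≤ ‖ξ‖ + α * ‖ζ‖ :=
          (norm_sub_le _ _).trans_eq (by rw [norm_smul, Real.norm_of_nonneg hα.le])
      _ ≤ 4 * A * ρ' + α * 1 := by gcongr
      _ ≤ α + γ := by nlinarith [mul_le_of_le_one_right (by positivity : 0 ≤ A) hρ'1]
  · have hθ : θ y ≤ θ v + ⟪ζ, y - v⟫ + ‖y - v‖ ^ 2 / (2 * δ) :=
      sqrt_sq_add_norm_sub_sq_le hδ z v y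
    have h : g v + α * θ v + ⟪ξ, y - v⟫ - A * ‖y - v‖ ^ 2 ≤ g y + α * θ y := hprox y
    have e : α / (2 * δ) * ‖y - v‖ ^ 2 = α * (‖y - v‖ ^ 2 / (2 * δ)) := by ring
    rw [inner_sub_left, real_inner_smul_left, add_mul, e]
    linarith [mul_le_mul_of_nonneg_left hθ hα.le]

lemma lowerSemicontinuous_of_le_liminf_of_weak {f : X → EReal}
    (hf : ∀ (z : X) (u : ℕ → X), (∀ y, Tendsto (fun n => ⟪u n, y⟫) atTop (𝓝 ⟪z, y⟫)) →
      f z ≤ liminf (fun n => f (u n)) atTop) :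
    LowerSemicontinuous f := by
  refine lowerSemicontinuous_iff_isClosed_preimage.2 fun a => IsSeqClosed.isClosed ?_
  intro u z hu hlim
  exact (hf z u fun y => hlim.inner tendsto_const_nhds).trans
    (liminf_le_of_frequently_le (Frequently.of_forall hu))

end Hilbert

/-- `e - a` clamped to `[0, c]`; the clamping is done in `EReal`, so `toReal` never sees `±∞`. -/
noncomputable def truncExcess (a c : ℝ) (e : EReal) : ℝ :=
  (max (a : EReal) (min ((a + c : ℝ) : EReal) e)).toReal - a

section truncExcess

variable {a c : ℝ} {e : EReal}

lemma coe_add_truncExcess (a c : ℝ) (e : EReal) :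
    ((a + truncExcess a c e : ℝ) : EReal) = max (a : EReal) (min ((a + c : ℝ) : EReal) e) := by
  rw [truncExcess, add_sub_cancel]
  refine EReal.coe_toReal (ne_top_of_le_ne_top (EReal.coe_ne_top (max a (a + c))) ?_)
    (ne_bot_of_le_ne_bot (EReal.coe_ne_bot a) (le_max_left _ _))
  exact max_le (by exact_mod_cast le_max_left _ _)
    ((min_le_left _ _).trans (by exact_mod_cast le_max_right _ _))

lemma truncExcess_mem_Icc (hc : 0 ≤ c) (e : EReal) : truncExcess a c e ∈ Icc 0 c := by
  have h := coe_add_truncExcess a c e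
  constructor
  · have : (a : EReal) ≤ ((a + truncExcess a c e : ℝ) : EReal) := h ▸ le_max_left _ _
    linarith [EReal.coe_le_coe_iff.1 this]
  · have : ((a + truncExcess a c e : ℝ) : EReal) ≤ ((a + c : ℝ) : EReal) :=
      h ▸ max_le (by exact_mod_cast (by linarith : a ≤ a + c)) (min_le_left _ _)
    linarith [EReal.coe_le_coe_iff.1 this]

lemma truncExcess_mem_Ico {η : ℝ} (hc : 0 ≤ c) (hcη : c < η) (e : EReal) :
    truncExcess a c e ∈ Ico 0 η :=
  ⟨(truncExcess_mem_Icc hc e).1, (truncExcess_mem_Icc hc e).2.trans_lt hcη⟩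

lemma monotone_truncExcess (a c : ℝ) : Monotone (truncExcess a c) := fun e e' h => by
  have := max_le_max (le_refl (a : EReal)) (min_le_min (le_refl ((a + c : ℝ) : EReal)) h)
  rw [← coe_add_truncExcess, ← coe_add_truncExcess, EReal.coe_le_coe_iff] at this
  linarith

lemma continuous_truncExcess (a c : ℝ) : Continuous (truncExcess a c) := by
  refine (EReal.continuousOn_toReal.comp_continuous
    (continuous_const.max (continuous_const.min continuous_id)) fun e => ?_).sub continuous_const
  rw [← coe_add_truncExcess]
  simp only [mem_compl_iff, mem_insert_iff, mem_singleton_iff, EReal.coe_ne_bot,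
    EReal.coe_ne_top, or_self, not_false_eq_true]

lemma truncExcess_coe_add {t : ℝ} (ht : t ∈ Icc 0 c) :
    truncExcess a c ((a + t : ℝ) : EReal) = t := by
  have := coe_add_truncExcess a c ((a + t : ℝ) : EReal)
  rw [min_eq_right (by exact_mod_cast (by linarith [ht.2] : a + t ≤ a + c)),
    max_eq_right (by exact_mod_cast (by linarith [ht.1] : a ≤ a + t)), EReal.coe_eq_coe_iff] at this
  linarith

lemma coe_add_truncExcess_le (h : 0 < truncExcess a c e) :
    ((a + truncExcess a c e : ℝ) : EReal) ≤ e := by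
  have ha : (a : EReal) < ((a + truncExcess a c e : ℝ) : EReal) := by exact_mod_cast (by linarith)
  rw [coe_add_truncExcess] at ha ⊢
  rw [max_eq_right (lt_max_iff.1 ha |>.resolve_left (lt_irrefl _)).le]
  exact min_le_right _ _

lemma le_of_truncExcess_nonpos (hc : 0 < c) (h : truncExcess a c e ≤ 0) : e ≤ a := by
  have ha : ((a + truncExcess a c e : ℝ) : EReal) ≤ a := by exact_mod_cast (by linarith)
  rw [coe_add_truncExcess, max_le_iff, min_le_iff] at ha
  exact ha.2.resolve_left (by exact_mod_cast (by linarith : ¬ a + c ≤ a))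

lemma coe_add_truncExcess_eq (h₁ : 0 < truncExcess a c e) (h₂ : truncExcess a c e < c) :
    ((a + truncExcess a c e : ℝ) : EReal) = e := by
  have ha : (a : EReal) < ((a + truncExcess a c e : ℝ) : EReal) := by exact_mod_cast (by linarith)
  have hc : ((a + truncExcess a c e : ℝ) : EReal) < ((a + c : ℝ) : EReal) := by
    exact_mod_cast (by linarith)
  rw [coe_add_truncExcess] at ha hc ⊢
  rw [max_eq_right (lt_max_iff.1 ha |>.resolve_left (lt_irrefl _)).le] at hc ⊢
  exact min_eq_right (min_lt_iff.1 hc |>.resolve_left (lt_irrefl _)).le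

end truncExcess

structure IsDesingularizing (η : ℝ) (φ φ' : ℝ → ℝ) : Prop where
  continuousOn : ContinuousOn φ (Ico 0 η)
  map_zero : φ 0 = 0
  concaveOn : ConcaveOn ℝ (Ico 0 η) φ
  hasDerivAt : ∀ s ∈ Ioo 0 η, HasDerivAt φ (φ' s) s
  deriv_pos : ∀ s ∈ Ioo 0 η, 0 < φ' s

namespace IsDesingularizing

variable {η : ℝ} {φ φ' : ℝ → ℝ}

lemma strictMonoOn (hφ : IsDesingularizing η φ φ') : StrictMonoOn φ (Ico 0 η) :=
  strictMonoOn_of_deriv_pos (convex_Ico 0 η) hφ.continuousOn fun s hs => by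
    rw [interior_Ico] at hs
    rw [(hφ.hasDerivAt s hs).deriv]
    exact hφ.deriv_pos s hs

lemma pos_iff (hφ : IsDesingularizing η φ φ') {s : ℝ} (hs : s ∈ Ico 0 η) : 0 < φ s ↔ 0 < s := by
  rw [← hφ.strictMonoOn.lt_iff_lt ⟨le_rfl, hs.1.trans_lt hs.2⟩ hs, hφ.map_zero]

lemma nonneg (hφ : IsDesingularizing η φ φ') {s : ℝ} (hs : s ∈ Ico 0 η) : 0 ≤ φ s := by
  rw [← hφ.map_zero]
  exact hφ.strictMonoOn.monotoneOn ⟨le_rfl, hs.1.trans_lt hs.2⟩ hs hs.1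

lemma le_add_mul_sub (hφ : IsDesingularizing η φ φ') {s u : ℝ} (hs : s ∈ Ioo 0 η)
    (hu : u ∈ Ico 0 η) : φ u ≤ φ s + φ' s * (u - s) :=
  hφ.concaveOn.le_add_mul_sub_of_hasDerivAt (Ioo_subset_Ico_self hs) hu (hφ.hasDerivAt s hs)

lemma lowerSemicontinuous_comp_truncExcess (hφ : IsDesingularizing η φ φ') {X : Type*}
    [TopologicalSpace X] {f : X → EReal} (hf : LowerSemicontinuous f) {a c : ℝ} (hc : 0 ≤ c)
    (hcη : c < η) : LowerSemicontinuous fun y => φ (truncExcess a c (f y)) :=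
  Continuous.comp_lowerSemicontinuous (g := φ ∘ truncExcess a c)
    (hφ.continuousOn.comp_continuous (continuous_truncExcess a c) (truncExcess_mem_Ico hc hcη))
    hf fun e e' he => hφ.strictMonoOn.monotoneOn (truncExcess_mem_Ico hc hcη e)
      (truncExcess_mem_Ico hc hcη e') (monotone_truncExcess a c he)

end IsDesingularizing

section KL

variable {X : Type*} [NormedAddCommGroup X] [InnerProductSpace ℝ X]

def HasKLProperty (f : X → EReal) (xb : X) (r η : ℝ) (φ' : ℝ → ℝ) : Prop :=
  ∀ x ∈ ball xb r, f xb < f x → f x < f xb + (η : EReal) →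
    ∀ ξ ∈ FrechetSubdiff f x, 1 ≤ φ' ((f x).toReal - (f xb).toReal) * ‖ξ‖

theorem HasKLProperty.one_le_of_forall_le_add_mul_norm [CompleteSpace X] {f : X → EReal}
    {xb z : X} {r η c α fb : ℝ} {φ φ' : ℝ → ℝ} (hKL : HasKLProperty f xb r η φ')
    (hφ : IsDesingularizing η φ φ') (hf : LowerSemicontinuous f) (hfb : f xb = fb) (hc : 0 < c)
    (hcη : c < η) (hz_mem : z ∈ ball xb r) (hgz : 0 < φ (truncExcess fb c (f z)))
    (hgzc : φ (truncExcess fb c (f z)) < φ c) (hα : 0 < α)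
    (hz : ∀ y, φ (truncExcess fb c (f z)) ≤ φ (truncExcess fb c (f y)) + α * ‖y - z‖) :
    1 ≤ α := by
  set m : X → ℝ := fun y => truncExcess fb c (f y)
  have hmη (y : X) : m y ∈ Ico 0 η := truncExcess_mem_Ico hc.le hcη (f y)
  have hg : LowerSemicontinuous (φ ∘ m) := hφ.lowerSemicontinuous_comp_truncExcess hf hc.le hcη
  by_contra! hα1
  set γ := min ((1 - α) / 2) ((φ c - φ (m z)) / 2)
  have hγ : 0 < γ := lt_min (by linarith) (by linarith)
  set ρ := min (r - dist z xb) (φ (m z) / α) / 2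
  have hρ : 0 < ρ := half_pos (lt_min (sub_pos.2 (mem_ball.1 hz_mem)) (by positivity))
  obtain ⟨v, ξ, M, hvz, hgv, hξ, hprox⟩ :=
    hg.exists_isProxSubgradient_of_forall_le_add_mul_norm hα hρ hγ hz
  have hρ₁ : ρ ≤ (r - dist z xb) / 2 := div_le_div_of_nonneg_right (min_le_left _ _) two_pos.le
  have hρ₂ : α * ρ ≤ φ (m z) / 2 :=
    calc α * ρ ≤ α * (φ (m z) / α / 2) :=
          mul_le_mul_of_nonneg_left (div_le_div_of_nonneg_right (min_le_right _ _) two_pos.le) hα.le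
      _ = φ (m z) / 2 := by field_simp
  set s := m v
  replace hgv : φ s ≤ φ (m z) + γ := hgv
  have hs0 : 0 < s := (hφ.pos_iff (hmη v)).1 (by nlinarith [hz v])
  have hsc : s < c := (hφ.strictMonoOn.lt_iff_lt (hmη v) ⟨hc.le, hcη⟩).1
    (by linarith [min_le_right ((1 - α) / 2) ((φ c - φ (m z)) / 2)])
  have hsη : s ∈ Ioo 0 η := ⟨hs0, hsc.trans hcη⟩
  have hfv : f v = ((fb + s : ℝ) : EReal) := (coe_add_truncExcess_eq hs0 hsc).symm
  have hv_mem : v ∈ ball xb r := by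
    rw [mem_ball]; linarith [dist_triangle v z xb, dist_eq_norm v z]
  -- the tangent line of the concave `φ` at `s` turns the subgradient of `φ ∘ m` into one of `f`
  have hmem : (φ' s)⁻¹ • ξ ∈ FrechetSubdiff f v := by
    refine ((hprox.of_comp (hφ.deriv_pos s hsη) fun y => hφ.le_add_mul_sub hsη (hmη y)).const_add
      fb).mem_frechetSubdiff hfv ?_
    filter_upwards [hg v 0 ((hφ.pos_iff (hmη v)).2 hs0)] with y hy
    exact coe_add_truncExcess_le ((hφ.pos_iff (hmη y)).1 hy)
  have hKLv := hKL v hv_mem (by rw [hfb, hfv]; exact_mod_cast (by linarith))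
    (by rw [hfb, hfv]; exact_mod_cast (by linarith)) _ hmem
  rw [hfv, hfb, EReal.toReal_coe, EReal.toReal_coe, add_sub_cancel_left, norm_smul, norm_inv,
    Real.norm_of_nonneg (hφ.deriv_pos s hsη).le,
    mul_inv_cancel_left₀ (hφ.deriv_pos s hsη).ne'] at hKLv
  linarith [min_le_left ((1 - α) / 2) ((φ c - φ (m z)) / 2)]

theorem HasKLProperty.infDist_le [CompleteSpace X] {f : X → EReal} {xb x : X}
    {r η fb t : ℝ} {φ φ' : ℝ → ℝ} (hKL : HasKLProperty f xb r η φ')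
    (hφ : IsDesingularizing η φ φ') (hf : LowerSemicontinuous f) (hfb : f xb = fb)
    (hfx : f x = ((fb + t : ℝ) : EReal)) (ht : t ∈ Ico 0 η) (hx : dist x xb + 2 * φ t < r) :
    infDist x {y | f y ≤ f xb} ≤ 2 * φ t := by
  obtain ⟨c, htc, hcη⟩ := exists_between ht.2
  have hc : 0 < c := ht.1.trans_lt htc
  have hmη (e : EReal) := truncExcess_mem_Ico (a := fb) hc.le hcη e
  obtain ⟨z, hzx, hz⟩ := (hφ.lowerSemicontinuous_comp_truncExcess hf hc.le hcη)
    |>.exists_forall_le_add_mul_dist ⟨0, by rintro _ ⟨y, rfl⟩; exact hφ.nonneg (hmη _)⟩ x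
      (by norm_num : (0 : ℝ) < 3 / 5)
  rw [hfx, truncExcess_coe_add ⟨ht.1, htc.le⟩] at hzx
  rcases (hφ.nonneg (hmη (f z))).eq_or_lt with hz0 | hz0
  · have hzS : z ∈ {y | f y ≤ f xb} := by
      rw [mem_ofPred_eq, hfb]
      exact le_of_truncExcess_nonpos hc (not_lt.1 ((hφ.pos_iff (hmη (f z))).not.1 hz0.symm.not_gt))
    calc infDist x {y | f y ≤ f xb} ≤ dist x z := infDist_le_dist_of_mem hzS
      _ ≤ 2 * φ t := by rw [dist_comm]; linarith [hφ.nonneg ht]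
  · refine absurd (hKL.one_le_of_forall_le_add_mul_norm (α := 3 / 5) hφ hf hfb hc hcη ?_ hz0 ?_
      (by norm_num) fun y => by rw [← dist_eq_norm]; exact hz y) (by norm_num)
    · rw [mem_ball]
      linarith [dist_triangle z x xb, hφ.nonneg ht]
    · linarith [hφ.strictMonoOn ht ⟨hc.le, hcη⟩ htc, dist_nonneg (x := z) (y := x)]

end KL

theorem stmt_10_general
    {X : Type*} [NormedAddCommGroup X] [InnerProductSpace ℝ X] [CompleteSpace X]
    (f : X → EReal)
    (hproper : (∀ x, f x ≠ ⊥) ∧ ∃ x, f x ≠ ⊤)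
    (hwlsc : ∀ (z : X) (u : ℕ → X),
      (∀ y : X, Tendsto (fun n => (inner ℝ (u n) y : ℝ)) atTop (nhds (inner ℝ z y : ℝ))) →
      f z ≤ liminf (fun n => f (u n)) atTop)
    (xb : X) (hxb : f xb ≠ ⊤)
    (r η : ℝ) (hr : 0 < r) (hη : 0 < η)
    (φ φ' : ℝ → ℝ)
    (hφc : ContinuousOn φ (Ico 0 η)) (hφ0 : φ 0 = 0)
    (hφconc : ConcaveOn ℝ (Ico 0 η) φ)
    (hφd : ∀ s ∈ Ioo 0 η, HasDerivAt φ (φ' s) s)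
    (hφ'pos : ∀ s ∈ Ioo 0 η, 0 < φ' s)
    (hKL : ∀ x ∈ ball xb r, f xb < f x → f x < f xb + (η : EReal) →
      ∀ ξ ∈ FrechetSubdiff f x, 1 ≤ φ' ((f x).toReal - (f xb).toReal) * ‖ξ‖)
    (S : Set X) (hS : S = {x | f x ≤ f xb}) :
    ∃ rt ηt : ℝ, 0 < rt ∧ rt ≤ r ∧ 0 < ηt ∧ ηt ≤ η ∧
      ∀ x ∈ ball xb rt, f xb ≤ f x → f x < f xb + (ηt : EReal) →
        infDist x S ≤ 2 * φ ((f x).toReal - (f xb).toReal) := by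
  have hsmall : ∀ᶠ s in 𝓝[≥] 0, φ s < r / 4 := by
    rw [← nhdsWithin_Ico_eq_nhdsGE hη]
    exact (hφc 0 ⟨le_rfl, hη⟩).eventually_lt_const (by rw [hφ0]; positivity)
  obtain ⟨u, hu, hu_sub⟩ := mem_nhdsGE_iff_exists_Ico_subset.1 hsmall
  refine ⟨r / 2, min u η, by positivity, by linarith, lt_min hu hη, min_le_right _ _,
    fun x hx hfx₁ hfx₂ => ?_⟩
  have hfb : f xb = ((f xb).toReal : EReal) := (EReal.coe_toReal hxb (hproper.1 xb)).symm
  set t := (f x).toReal - (f xb).toReal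
  have hfx : f x = (((f xb).toReal + t : ℝ) : EReal) := by
    rw [add_sub_cancel, EReal.coe_toReal hfx₂.ne_top (hproper.1 x)]
  rw [hfb, hfx, EReal.coe_le_coe_iff] at hfx₁
  rw [hfb, hfx, ← EReal.coe_add, EReal.coe_lt_coe_iff] at hfx₂
  have ht : t ∈ Ico 0 (min u η) := ⟨by linarith, by linarith⟩
  have hφt : φ t < r / 4 := hu_sub ⟨ht.1, ht.2.trans_le (min_le_left _ _)⟩
  subst hS
  exact HasKLProperty.infDist_le hKL ⟨hφc, hφ0, hφconc, hφd, hφ'pos⟩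
    (lowerSemicontinuous_of_le_liminf_of_weak hwlsc) hfb hfx
    ⟨ht.1, ht.2.trans_le (min_le_right _ _)⟩ (by linarith [mem_ball.1 hx])

/-- KL condition (w.r.t. the Fréchet subdifferential) implies a growth error bound on a
possibly smaller set, for proper weakly lower semicontinuous (possibly nonconvex) functions
(Theorem 2.4 / thm2). Weak lsc is encoded sequentially via weak convergence. -/
theorem stmt_10
    {X : Type*} [NormedAddCommGroup X] [InnerProductSpace ℝ X] [CompleteSpace X]
    (f : X → EReal)
    (hproper : (∀ x, f x ≠ ⊥) ∧ ∃ x, f x ≠ ⊤)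
    (hwlsc : ∀ (z : X) (u : ℕ → X),
      (∀ y : X, Tendsto (fun n => (inner ℝ (u n) y : ℝ)) atTop (nhds (inner ℝ z y : ℝ))) →
      f z ≤ liminf (fun n => f (u n)) atTop)
    (xb : X) (hxb : f xb ≠ ⊤)
    (r η : ℝ) (hr : 0 < r) (hη : 0 < η)
    (φ φ' : ℝ → ℝ)
    (hφc : ContinuousOn φ (Ico 0 η)) (hφ0 : φ 0 = 0)
    (hφconc : ConcaveOn ℝ (Ico 0 η) φ)
    (hφd : ∀ s ∈ Ioo 0 η, HasDerivAt φ (φ' s) s)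
    (hφ'c : ContinuousOn φ' (Ioo 0 η))
    (hφ'pos : ∀ s ∈ Ioo 0 η, 0 < φ' s)
    (hKL : ∀ x ∈ ball xb r, f xb < f x → f x < f xb + (η : EReal) →
      ∀ ξ ∈ FrechetSubdiff f x, 1 ≤ φ' ((f x).toReal - (f xb).toReal) * ‖ξ‖)
    (S : Set X) (hS : S = {x | f x ≤ f xb}) :
    ∃ rt ηt : ℝ, 0 < rt ∧ rt ≤ r ∧ 0 < ηt ∧ ηt ≤ η ∧
      ∀ x ∈ ball xb rt, f xb ≤ f x → f x < f xb + (ηt : EReal) →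
        infDist x S ≤ 2 * φ ((f x).toReal - (f xb).toReal) :=
  stmt_10_general f hproper hwlsc xb hxb r η hr hη φ φ' hφc hφ0 hφconc hφd hφ'pos hKL S hS
end
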